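/- arXiv:1112.3523 — 5 statements merged into one kernel-verified Lean document; each statement's English description precedes it below -/
import Mathlib

section
/- Let u, v, x, y be four points in the plane forming a Tie(u; v, x, y). Then both angles ∠(u v x) and ∠(y v u) satisfy π/3 ≤ angle < 2π/3. -/
set_option maxHeartbeats 1000000


open EuclideanGeometry Real

open scoped RealInnerProductSpace

abbrev Pt := EuclideanSpace ℝ (Fin 2)

/-- Two segments cross: they meet at a point interior to both. -/
def Crosses (a b c d : Pt) : Prop :=
  ∃ p : Pt, p ∈ openSegment ℝ a b ∧ p ∈ openSegment ℝ c d

/-- Tie(a; b, c, d). -/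
def Tie (a b c d : Pt) : Prop :=
  Crosses a b c d ∧ dist a c > dist a b ∧ dist a d > dist a b ∧ dist a c > dist c d

lemma angle_bounds (A B : Pt) (hA : A ≠ 0) (hB : B ≠ 0)
    (h1 : ⟪A, B⟫ < ‖A‖ * ‖B‖ / 2) (h2 : -(‖A‖ * ‖B‖ / 2) < ⟪A, B⟫) :
    π / 3 < InnerProductGeometry.angle A B ∧ InnerProductGeometry.angle A B < 2 * π / 3 := by
  have hAp : 0 < ‖A‖ := norm_pos_iff.2 hA
  have hBp : 0 < ‖B‖ := norm_pos_iff.2 hB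
  have hABp : 0 < ‖A‖ * ‖B‖ := mul_pos hAp hBp
  have hcos : Real.cos (InnerProductGeometry.angle A B) = ⟪A, B⟫ / (‖A‖ * ‖B‖) :=
    InnerProductGeometry.cos_angle A B
  have hc1 : Real.cos (InnerProductGeometry.angle A B) < 1 / 2 := by
    rw [hcos, div_lt_iff₀ hABp]; linarith
  have hc2 : -(1 / 2) < Real.cos (InnerProductGeometry.angle A B) := by
    rw [hcos, lt_div_iff₀ hABp]; linarith
  have hnn : 0 ≤ InnerProductGeometry.angle A B := InnerProductGeometry.angle_nonneg A B
  have hle : InnerProductGeometry.angle A B ≤ π := InnerProductGeometry.angle_le_pi A B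
  have hpi : (0:ℝ) < π := Real.pi_pos
  constructor
  · by_contra h
    push_neg at h
    have := Real.cos_le_cos_of_nonneg_of_le_pi hnn (by linarith) h
    rw [Real.cos_pi_div_three] at this
    linarith
  · by_contra h
    push_neg at h
    have h23 : (2 * π / 3 : ℝ) = π - π / 3 := by ring
    have := Real.cos_le_cos_of_nonneg_of_le_pi (by linarith : (0:ℝ) ≤ 2 * π / 3) hle h
    rw [h23, Real.cos_pi_sub, Real.cos_pi_div_three] at this
    linarith

theorem stmt1 (u v x y : Pt) (htie : Tie u v x y) :
    (π / 3 ≤ EuclideanGeometry.angle u v x ∧ EuclideanGeometry.angle u v x < 2 * π / 3) ∧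
    (π / 3 ≤ EuclideanGeometry.angle y v u ∧ EuclideanGeometry.angle y v u < 2 * π / 3) := by
  obtain ⟨⟨p, hpuv, hpxy⟩, hux, huy, huxy⟩ := htie
  -- segment distance equalities
  have hseg1 : dist u p + dist p v = dist u v :=
    dist_add_dist_of_mem_segment (openSegment_subset_segment ℝ u v hpuv)
  have hseg2 : dist x p + dist p y = dist x y :=
    dist_add_dist_of_mem_segment (openSegment_subset_segment ℝ x y hpxy)
  have t1 : dist u y ≤ dist u p + dist p y := dist_triangle u p y
  have t2 : dist u x ≤ dist u p + dist p x := dist_triangle u p x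
  have t3 : dist v x ≤ dist v p + dist p x := dist_triangle v p x
  have t4 : dist v y ≤ dist v p + dist p y := dist_triangle v p y
  have hxp : dist x p = dist p x := dist_comm x p
  have hvp : dist v p = dist p v := dist_comm v p
  -- derived distance facts
  have d1 : dist p v < dist p y := by linarith
  have d2 : dist p y < dist u p := by linarith
  have hvx : dist v x < dist u x := by linarith
  have hvy : dist v y < dist u y := by linarith
  -- nondegeneracy
  have huv : u ≠ v := by
    intro h; rw [h] at d2
    have hpy0 : (0:ℝ) ≤ dist p y := dist_nonneg
    have hpv0 : (0:ℝ) ≤ dist p v := dist_nonneg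
    linarith
  have hxv : x ≠ v := by
    intro h; rw [h] at hux; exact absurd (dist_comm v u ▸ hux) (by simp)
  have hyv : y ≠ v := by
    intro h; rw [h] at huy; exact absurd (dist_comm v u ▸ huy) (by simp)
  set A : Pt := u - v with hA
  set B : Pt := x - v with hB
  set C : Pt := y - v with hC
  have hAne : A ≠ 0 := sub_ne_zero.2 huv
  have hBne : B ≠ 0 := sub_ne_zero.2 hxv
  have hCne : C ≠ 0 := sub_ne_zero.2 hyv
  have hAp : 0 < ‖A‖ := norm_pos_iff.2 hAne
  have hBp : 0 < ‖B‖ := norm_pos_iff.2 hBne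
  have hCp : 0 < ‖C‖ := norm_pos_iff.2 hCne
  -- norms vs distances
  have nA : ‖A‖ = dist u v := (dist_eq_norm u v).symm
  have nB : ‖B‖ = dist x v := (dist_eq_norm x v).symm
  have nC : ‖C‖ = dist y v := (dist_eq_norm y v).symm
  have nAB : ‖A - B‖ = dist u x := by rw [hA, hB]; rw [dist_eq_norm]; congr 1; abel
  have nAC : ‖A - C‖ = dist u y := by rw [hA, hC]; rw [dist_eq_norm]; congr 1; abel
  have sqAB : ‖A - B‖ ^ 2 = ‖A‖ ^ 2 - 2 * ⟪A, B⟫ + ‖B‖ ^ 2 := norm_sub_sq_real A B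
  have sqAC : ‖A - C‖ ^ 2 = ‖A‖ ^ 2 - 2 * ⟪A, C⟫ + ‖C‖ ^ 2 := norm_sub_sq_real A C
  -- lower-bound inequalities
  have I1 : ⟪A, B⟫ < ‖A‖ * ‖B‖ / 2 := by
    have h1 : ‖A‖ < ‖A - B‖ := by rw [nA, nAB]; exact hux
    have h2 : ‖B‖ < ‖A - B‖ := by rw [nB, nAB, dist_comm x v]; exact hvx
    nlinarith [hAp, hBp, mul_pos hAp hBp]
  have I2 : ⟪A, C⟫ < ‖A‖ * ‖C‖ / 2 := by
    have h1 : ‖A‖ < ‖A - C‖ := by rw [nA, nAC]; exact huy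
    have h2 : ‖C‖ < ‖A - C‖ := by rw [nC, nAC, dist_comm y v]; exact hvy
    nlinarith [hAp, hCp, mul_pos hAp hCp]
  -- crossing decomposition
  obtain ⟨c1, c2, hc1, hc2, hcs, hcp⟩ := hpuv
  obtain ⟨a, b, ha, hb, habs, habp⟩ := hpxy
  have hdec : c1 • A = a • B + b • C := by
    have e1 : p - v = c1 • A := by
      rw [hA, ← hcp]
      have : c2 = 1 - c1 := by linarith
      rw [this]; module
    have e2 : p - v = a • B + b • C := by
      rw [hB, hC, ← habp]
      have : b = 1 - a := by linarith
      rw [this]; module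
    rw [← e1, e2]
  have e1 : c1 * ⟪A, B⟫ = a * ‖B‖ ^ 2 + b * ⟪C, B⟫ := by
    rw [← real_inner_smul_left, hdec, inner_add_left, real_inner_smul_left,
      real_inner_smul_left, real_inner_self_eq_norm_sq]
  have e2 : c1 * ⟪A, C⟫ = a * ⟪B, C⟫ + b * ‖C‖ ^ 2 := by
    rw [← real_inner_smul_left, hdec, inner_add_left, real_inner_smul_left,
      real_inner_smul_left, real_inner_self_eq_norm_sq]
  have hBC : ⟪C, B⟫ = ⟪B, C⟫ := real_inner_comm B C
  have hCS : -(‖B‖ * ‖C‖) ≤ ⟪B, C⟫ := by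
    have := abs_real_inner_le_norm B C
    cases abs_le.1 this with
    | intro h _ => linarith
  have I3 : 0 ≤ ⟪A, B⟫ * ‖C‖ + ⟪A, C⟫ * ‖B‖ := by
    have hfac : 0 ≤ (a * ‖B‖ + b * ‖C‖) * (‖B‖ * ‖C‖ + ⟪B, C⟫) := by
      apply mul_nonneg
      · positivity
      · linarith
    have hlin : c1 * (⟪A, B⟫ * ‖C‖ + ⟪A, C⟫ * ‖B‖)
        = (a * ‖B‖ + b * ‖C‖) * (‖B‖ * ‖C‖ + ⟪B, C⟫) := by
      rw [hBC] at e1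
      linear_combination ‖C‖ * e1 + ‖B‖ * e2
    have h0 : c1 * 0 ≤ c1 * (⟪A, B⟫ * ‖C‖ + ⟪A, C⟫ * ‖B‖) := by
      rw [mul_zero, hlin]; exact hfac
    exact le_of_mul_le_mul_left h0 hc1
  -- upper-bound inequalities
  have I4 : -(‖A‖ * ‖B‖ / 2) < ⟪A, B⟫ := by
    nlinarith [mul_lt_mul_of_pos_right I2 hBp, I3, hCp, mul_pos hAp hBp]
  have I5 : -(‖A‖ * ‖C‖ / 2) < ⟪A, C⟫ := by
    nlinarith [mul_lt_mul_of_pos_right I1 hCp, I3, hBp, mul_pos hAp hCp]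
  -- conclude
  have hang1 : EuclideanGeometry.angle u v x = InnerProductGeometry.angle A B := by
    rw [EuclideanGeometry.angle, hA, hB]; norm_num [vsub_eq_sub]
  have hang2 : EuclideanGeometry.angle y v u = InnerProductGeometry.angle C A := by
    rw [EuclideanGeometry.angle, hA, hC]; norm_num [vsub_eq_sub]
  have hCA : InnerProductGeometry.angle C A = InnerProductGeometry.angle A C :=
    InnerProductGeometry.angle_comm C A
  have r1 := angle_bounds A B hAne hBne I1 I4
  have r2 := angle_bounds A C hAne hCne I2 I5
  rw [hang1, hang2, hCA]
  exact ⟨⟨le_of_lt r1.1, r1.2⟩, ⟨le_of_lt r2.1, r2.2⟩⟩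
end

section
/- Let u, v, x, y form a Tie(u; v, x, y), and let u' be a point such that segment u'x crosses segment uv. Then the four points u', x, u, v cannot form a Tie(u'; x, u, v). -/
open EuclideanGeometry Real

/-! If the segments `u'x` and `uv` cross, the sum of the diagonals `u'v` and `ux` of the
quadrilateral is at most the sum of the crossing segments `u'x` and `uv`. `Tie(u'; x, u, v)` would
give `d(u', v) > d(u', x)` and `Tie(u; v, x, y)` gives `d(u, x) > d(u, v)`, which add up to the
opposite inequality. -/

theorem dist_add_dist_le_of_mem_segment_of_mem_segment {E : Type*} [SeminormedAddCommGroup E]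
    [NormedSpace ℝ E] {a b c d p : E} (hab : p ∈ segment ℝ a b) (hcd : p ∈ segment ℝ c d) :
    dist a d + dist c b ≤ dist a b + dist c d := by
  have hapb := dist_add_dist_of_mem_segment hab
  have hcpd := dist_add_dist_of_mem_segment hcd
  linarith [dist_triangle a p d, dist_triangle c p b]

theorem Crosses.dist_add_dist_le {a b c d : Pt} (h : Crosses a b c d) :
    dist a d + dist c b ≤ dist a b + dist c d :=
  let ⟨_, hab, hcd⟩ := h
  dist_add_dist_le_of_mem_segment_of_mem_segment
    (openSegment_subset_segment _ _ _ hab) (openSegment_subset_segment _ _ _ hcd)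

theorem stmt3_general (u v x y u' : Pt) (htie : Tie u v x y) :
    ¬ Tie u' x u v := by
  rintro ⟨hcross, -, hv_far, -⟩
  linarith [hcross.dist_add_dist_le, htie.2.1]

theorem stmt3 (u v x y u' : Pt) (htie : Tie u v x y)
    (hcross : Crosses u' x u v) :
    ¬ Tie u' x u v :=
  stmt3_general u v x y u' htie
end

section
/- Let u, v, x, y form a Tie(u; v, x, y) with max(d(u,v), d(x,y)) ≤ 1. Then d(u,x) ≤ √2 and d(u,y) ≤ √2. -/
open EuclideanGeometry Real

/-!
Let `p` be the crossing point. It lies on `uv`, so `d(u,p) ≤ d(u,v) ≤ 1`, and it splits `xy`.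
Stewart's theorem for the cevian `up` of the triangle `uxy`, combined with `d(u,p) < d(u,y)`,
gives `d(u,x)² ≤ d(u,p)² + d(x,p) d(x,y) ≤ 1 + 1`; symmetrically for `y`.
-/

theorem sbtw_of_mem_openSegment {V : Type*} [AddCommGroup V] [Module ℝ V] {x y z : V}
    (h : y ∈ openSegment ℝ x z) (hxz : x ≠ z) : Sbtw ℝ x y z :=
  sbtw_iff_mem_image_Ioo_and_ne.2 ⟨openSegment_eq_image_lineMap ℝ x z ▸ h, hxz⟩

theorem dist_le_of_mem_openSegment {V : Type*} [SeminormedAddCommGroup V] [NormedSpace ℝ V]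
    {x y z : V} (h : y ∈ openSegment ℝ x z) : dist x y ≤ dist x z := by
  have := dist_add_dist_of_mem_segment (openSegment_subset_segment ℝ x z h)
  linarith [dist_nonneg (x := y) (y := z)]

section Stewart

variable {V P : Type*} [NormedAddCommGroup V] [InnerProductSpace ℝ V] [MetricSpace P]
  [NormedAddTorsor V P]

theorem dist_sq_le_of_sbtw_of_dist_le {a b c p : P} (h : Sbtw ℝ b p c)
    (hc : dist a p ≤ dist a c) :
    dist a b ^ 2 ≤ dist a p ^ 2 + dist b p * dist b c := by
  have hstewart := dist_sq_mul_dist_add_dist_sq_mul_dist a b c p h.angle₁₂₃_eq_pi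
  have hsplit : dist b p + dist p c = dist b c := h.wbtw.dist_add_dist
  have hcp : 0 < dist c p := dist_pos.2 h.ne_right.symm
  have hac : dist a p ^ 2 * dist b p ≤ dist a c ^ 2 * dist b p :=
    mul_le_mul_of_nonneg_right (pow_le_pow_left₀ dist_nonneg hc 2) dist_nonneg
  refine le_of_mul_le_mul_right ?_ hcp
  rw [dist_comm p c] at hsplit
  nlinarith

end Stewart

theorem stmt4 (u v x y : Pt) (htie : Tie u v x y)
    (hmax : max (dist u v) (dist x y) ≤ 1) :
    dist u x ≤ Real.sqrt 2 ∧ dist u y ≤ Real.sqrt 2 := by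
  obtain ⟨⟨p, hpuv, hpxy⟩, hux, huy, -⟩ := htie
  obtain ⟨huv1, hxy1⟩ := max_le_iff.1 hmax
  have hup : dist u p ≤ dist u v := dist_le_of_mem_openSegment hpuv
  have hxy : x ≠ y := by
    rintro rfl
    rw [openSegment_same, Set.mem_singleton_iff] at hpxy
    subst hpxy
    linarith
  have hsbtw : Sbtw ℝ x p y := sbtw_of_mem_openSegment hpxy hxy
  have hup1 : dist u p ≤ 1 := hup.trans huv1
  have bound : ∀ {b c : Pt}, Sbtw ℝ b p c → dist u p ≤ dist u c → dist b c ≤ 1 →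
      dist u b ≤ √2 := by
    intro b c hb hc hbc
    have hbp : dist b p ≤ 1 :=
      (hb.wbtw.dist_add_dist ▸ le_add_of_nonneg_right dist_nonneg).trans hbc
    refine Real.le_sqrt_of_sq_le ?_
    calc dist u b ^ 2 ≤ dist u p ^ 2 + dist b p * dist b c :=
          dist_sq_le_of_sbtw_of_dist_le hb hc
      _ ≤ 1 + 1 := add_le_add (pow_le_one₀ dist_nonneg hup1) (mul_le_one₀ hbp dist_nonneg hbc)
      _ = 2 := by norm_num
  exact ⟨bound hsbtw (by linarith) hxy1,
    bound hsbtw.symm (by linarith) (dist_comm x y ▸ hxy1)⟩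
end

section
/- Let u, v, x, y be four points in the plane such that segments uv and xy cross, and suppose u and v both lie strictly outside the closed disk D(x; d(x,y)) centered at x with radius d(x,y). Then the angle ∠(v y u) at y is at least π/2, and consequently d(u,v) > d(u,y) and d(u,v) > d(v,y). -/
set_option maxHeartbeats 1000000

open EuclideanGeometry Real

lemma aux6 (t s A B C : ℝ) (ht0 : 0 < t) (ht1 : t < 1) (hs0 : 0 < s) (hs1 : s < 1)
    (hA : 0 ≤ A) (hC : 0 ≤ C) (hB2 : B ^ 2 ≤ A * C)
    (hv : s * (2 - s) * C < t ^ 2 * A + 2 * t * (1 - s) * B)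
    (hu : s * (2 - s) * C < (1 - t) ^ 2 * A - 2 * (1 - t) * (1 - s) * B)
    (hBpos : 0 < B) :
    0 ≤ t * (1 - t) * A - (1 - t - t) * s * B - s ^ 2 * C := by
  rcases le_or_gt s (2 * t) with h | h
  · have key : 0 ≤ (2 * t - s) * ((1 - t) * A + s * B) := by
      apply mul_nonneg (by linarith)
      have := mul_nonneg hs0.le hBpos.le
      nlinarith
    nlinarith [mul_lt_mul_of_pos_left hu hs0, key, sub_pos.2 hs1]
  rcases le_or_gt (s * B) (t * A) with h2 | h2
  · have key : 0 ≤ (2 * (1 - t) - s) * (t * A - s * B) := by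
      apply mul_nonneg (by linarith) (by linarith)
    nlinarith [mul_lt_mul_of_pos_left hv hs0, key, sub_pos.2 hs1]
  · have hA0 : 0 < A := by nlinarith [mul_pos hBpos hBpos]
    have h1 : t ^ 2 * A < s ^ 2 * C := by
      have e1 : t * A * (t * A) < s * B * (s * B) :=
        mul_self_lt_mul_self (by positivity) h2
      have e2 : B ^ 2 * s ^ 2 ≤ A * C * s ^ 2 := by nlinarith [sq_nonneg s]
      nlinarith [hA0]
    have h3 : s * C < t * B := by
      nlinarith [h1, hv, sub_pos.2 hs1]
    have hC0 : 0 < C := by nlinarith [mul_pos hBpos hBpos]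
    have key : 0 < (t * B - s * C) * ((1 - t) * B + s * C) := by
      apply mul_pos (by linarith)
      have := mul_pos hs0 hC0
      nlinarith
    nlinarith [key, hC0, mul_le_mul_of_nonneg_left hB2 (mul_nonneg ht0.le (by linarith : (0:ℝ) ≤ 1 - t))]

lemma alg6 (t s A B C : ℝ) (ht0 : 0 < t) (ht1 : t < 1) (hs0 : 0 < s) (hs1 : s < 1)
    (hA : 0 ≤ A) (hC : 0 ≤ C) (hB2 : B ^ 2 ≤ A * C)
    (hv : s * (2 - s) * C < t ^ 2 * A + 2 * t * (1 - s) * B)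
    (hu : s * (2 - s) * C < (1 - t) ^ 2 * A - 2 * (1 - t) * (1 - s) * B) :
    0 ≤ t * (1 - t) * A - (1 - t - t) * s * B - s ^ 2 * C := by
  have hstar : s * (2 - s) * C < t * (1 - t) * A := by
    nlinarith [mul_lt_mul_of_pos_left hu ht0, mul_lt_mul_of_pos_left hv (by linarith : (0:ℝ) < 1 - t)]
  rcases le_or_gt ((1 - t - t) * B) (2 * (1 - s) * C) with h | h
  · nlinarith [hstar, mul_le_mul_of_nonneg_left h hs0.le]
  · have hne : 0 < (1 - t - t) * B := by
      nlinarith [mul_nonneg (by linarith : (0:ℝ) ≤ 2 * (1 - s)) hC]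
    rcases lt_trichotomy B 0 with hB | hB | hB
    · have := aux6 (1 - t) s A (-B) C (by nlinarith) (by nlinarith) hs0 hs1 hA hC
        (by nlinarith) (by nlinarith [hu]) (by nlinarith [hv]) (by linarith)
      nlinarith [this]
    · simp [hB] at hne
    · exact aux6 t s A B C ht0 ht1 hs0 hs1 hA hC hB2 hv hu hB

open RealInnerProductSpace in
theorem stmt6 (u v x y : Pt)
    (hcross : Crosses u v x y)
    (hu : dist u x > dist x y) (hv : dist v x > dist x y) :
    EuclideanGeometry.angle v y u ≥ π / 2 ∧
    dist u v > dist u y ∧ dist u v > dist v y := by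
  obtain ⟨p, hp1, hp2⟩ := hcross
  obtain ⟨a1, b1, ha1, hb1, hab1, hp1⟩ := hp1
  obtain ⟨a2, b2, ha2, hb2, hab2, hp2⟩ := hp2
  have hb1' : b1 = 1 - a1 := by linarith
  have hb2' : b2 = 1 - a2 := by linarith
  subst hb1' hb2'
  have heq : a1 • u + (1 - a1) • v = a2 • x + (1 - a2) • y := hp1.trans hp2.symm
  set W := u - v with hW
  set Z := x - y with hZ
  have e1 : u - y = (1 - a1) • W + a2 • Z := by
    rw [hW, hZ]; linear_combination (norm := module) heq
  have e2 : v - y = -(a1 • W) + a2 • Z := by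
    rw [hW, hZ]; linear_combination (norm := module) heq
  have e3 : u - x = (1 - a1) • W - (1 - a2) • Z := by
    rw [hW, hZ]; linear_combination (norm := module) heq
  have e4 : v - x = -(a1 • W) - (1 - a2) • Z := by
    rw [hW, hZ]; linear_combination (norm := module) heq
  set A := ⟪W, W⟫ with hA
  set B := ⟪W, Z⟫ with hB
  set C := ⟪Z, Z⟫ with hCdef
  have hAnn : 0 ≤ A := real_inner_self_nonneg
  have hCnn : 0 ≤ C := real_inner_self_nonneg
  have hCS : B ^ 2 ≤ A * C := by
    have := real_inner_mul_inner_self_le W Z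
    nlinarith [this]
  have hZW : ⟪Z, W⟫ = B := real_inner_comm W Z
  -- squared-distance hypotheses
  have hu2 : C < ⟪u - x, u - x⟫ := by
    rw [hCdef, real_inner_self_eq_norm_sq, real_inner_self_eq_norm_sq, hZ]
    have h1 : ‖x - y‖ < ‖u - x‖ := by
      rwa [dist_eq_norm, dist_eq_norm] at hu
    exact pow_lt_pow_left₀ h1 (norm_nonneg _) two_ne_zero
  have hv2 : C < ⟪v - x, v - x⟫ := by
    rw [hCdef, real_inner_self_eq_norm_sq, real_inner_self_eq_norm_sq, hZ]
    have h1 : ‖x - y‖ < ‖v - x‖ := by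
      rwa [dist_eq_norm, dist_eq_norm] at hv
    exact pow_lt_pow_left₀ h1 (norm_nonneg _) two_ne_zero
  have expu : ⟪u - x, u - x⟫
      = (1 - a1) ^ 2 * A - 2 * (1 - a1) * (1 - a2) * B + (1 - a2) ^ 2 * C := by
    rw [e3]
    simp only [inner_sub_left, inner_sub_right, inner_neg_left, inner_neg_right,
      real_inner_smul_left, real_inner_smul_right, hZW, ← hA, ← hB, ← hCdef]
    ring
  have expv : ⟪v - x, v - x⟫
      = a1 ^ 2 * A + 2 * a1 * (1 - a2) * B + (1 - a2) ^ 2 * C := by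
    rw [e4]
    simp only [inner_sub_left, inner_sub_right, inner_neg_left, inner_neg_right,
      real_inner_smul_left, real_inner_smul_right, hZW, ← hA, ← hB, ← hCdef]
    ring
  have key := alg6 a1 a2 A B C ha1 (by linarith) ha2 (by linarith) hAnn hCnn hCS
    (by rw [expv] at hv2; nlinarith [hv2]) (by rw [expu] at hu2; nlinarith [hu2])
  have hinner : ⟪u - y, v - y⟫ ≤ 0 := by
    have expuy : ⟪u - y, v - y⟫
        = -(a1 * (1 - a1) * A) + (1 - a1 - a1) * a2 * B + a2 ^ 2 * C := by
      rw [e1, e2]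
      simp only [inner_add_left, inner_add_right, inner_neg_left, inner_neg_right,
        real_inner_smul_left, real_inner_smul_right, hZW, ← hA, ← hB, ← hCdef]
      ring
    rw [expuy]; linarith [key]
  have hune : u ≠ y := by
    intro h; rw [h, dist_comm] at hu; exact lt_irrefl _ hu
  have hvne : v ≠ y := by
    intro h; rw [h, dist_comm] at hv; exact lt_irrefl _ hv
  have hnu : 0 < ‖u - y‖ := by simpa [sub_ne_zero] using hune
  have hnv : 0 < ‖v - y‖ := by simpa [sub_ne_zero] using hvne
  refine ⟨?_, ?_, ?_⟩
  · -- angle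
    rw [EuclideanGeometry.angle, vsub_eq_sub, vsub_eq_sub, InnerProductGeometry.angle, ge_iff_le]
    have hq : ⟪v - y, u - y⟫ / (‖v - y‖ * ‖u - y‖) ≤ 0 := by
      apply div_nonpos_of_nonpos_of_nonneg
      · rw [real_inner_comm]; exact hinner
      · positivity
    have hq1 : -1 ≤ ⟪v - y, u - y⟫ / (‖v - y‖ * ‖u - y‖) :=
      (abs_le.mp (abs_real_inner_div_norm_mul_norm_le_one (v - y) (u - y))).1
    rw [Real.arccos]
    have := Real.arcsin_nonpos.2 hq
    linarith
  · -- dist u v > dist u y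
    have huv : u - v = (u - y) - (v - y) := by abel
    have hexp : ‖u - v‖ ^ 2 = ‖u - y‖ ^ 2 - 2 * ⟪u - y, v - y⟫ + ‖v - y‖ ^ 2 := by
      rw [huv]; exact norm_sub_sq_real _ _
    have hsq : dist u y ^ 2 < dist u v ^ 2 := by
      rw [dist_eq_norm, dist_eq_norm, hexp]
      nlinarith [hinner, pow_pos hnv 2]
    exact lt_of_pow_lt_pow_left₀ 2 dist_nonneg hsq
  · have huv : u - v = (u - y) - (v - y) := by abel
    have hexp : ‖u - v‖ ^ 2 = ‖u - y‖ ^ 2 - 2 * ⟪u - y, v - y⟫ + ‖v - y‖ ^ 2 := by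
      rw [huv]; exact norm_sub_sq_real _ _
    have hsq : dist v y ^ 2 < dist u v ^ 2 := by
      rw [dist_eq_norm, dist_eq_norm, hexp]
      nlinarith [hinner, pow_pos hnu 2]
    exact lt_of_pow_lt_pow_left₀ 2 dist_nonneg hsq
end

section
/- Let u, v, u', v' be four points such that segments uv and u'v' cross, d(u,v') < d(u,v) < d(u,u') and d(u',v) < d(u',v') < d(u,u') (so they form a Bow(u, v, u', v')). Then every point p distinct from u, v, u', v' lying in the convex quadrilateral with vertices u, v', v, u' satisfies d(p,u) < d(u,v) or d(p,u') < d(u',v'). -/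
open EuclideanGeometry Real

/-!
The crossing point `c` cuts the quadrilateral into the four triangles `c x y` with `x ∈ {u, v}`
and `y ∈ {u', v'}`, and `c` lies in both open disks. The triangles `c u v'` and `c v u'` have all
their vertices in the open disk around `u`, resp. `u'`; the triangle `c v v'` has two vertices in
the open disk around `u'` and the third, `v'`, on its boundary. On the triangle `c u u'` the convex
function `z ↦ d(z, u) + d(z, u')` stays below `d(u, v) + d(u', v')`, since it does so at `c` and,
by the triangle inequality through `c`, at `u` and `u'`.
-/

open Metric Set

section
variable {𝕜 E : Type*} [Field 𝕜] [LinearOrder 𝕜] [IsStrictOrderedRing 𝕜] [AddCommGroup E]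
  [Module 𝕜 E]

theorem segment_subset_union_of_mem_segment {a b c : E} (hc : c ∈ segment 𝕜 a b) :
    segment 𝕜 a b ⊆ segment 𝕜 a c ∪ segment 𝕜 c b := by
  intro x hx
  rw [mem_segment_iff_wbtw] at hc hx
  rw [mem_union, mem_segment_iff_wbtw, mem_segment_iff_wbtw]
  obtain ⟨s, hs, rfl⟩ := hc
  obtain ⟨t, ht, rfl⟩ := id hx
  rcases wbtw_or_wbtw_smul_vadd_of_nonneg a (b -ᵥ a) ht.1 hs.1 with h | h
  · left
    simpa only [AffineMap.lineMap_apply] using h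
  · right
    exact hx.trans_left_right (by simpa only [AffineMap.lineMap_apply] using h)

theorem convexHull_quadrilateral_subset {a b a' b' c : E} (hc : c ∈ segment 𝕜 a b)
    (hc' : c ∈ segment 𝕜 a' b') :
    convexHull 𝕜 {a, b, a', b'} ⊆ convexHull 𝕜 {c, a, a'} ∪ convexHull 𝕜 {c, a, b'} ∪
      convexHull 𝕜 {c, b, a'} ∪ convexHull 𝕜 {c, b, b'} := by
  have htriangle (x y : E) : convexJoin 𝕜 (segment 𝕜 c x) (segment 𝕜 c y) =
      convexHull 𝕜 {c, x, y} := by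
    rw [convexJoin_segments, insert_comm x c, insert_idem]
  rw [← convexJoin_segments]
  refine (convexJoin_mono (segment_subset_union_of_mem_segment hc)
    (segment_subset_union_of_mem_segment hc')).trans ?_
  rw [segment_symm 𝕜 a c, segment_symm 𝕜 a' c, convexJoin_union_left, convexJoin_union_right,
    convexJoin_union_right, htriangle, htriangle, htriangle, htriangle]
  simp only [union_assoc, subset_refl]

end

section
variable {E : Type*} [NormedAddCommGroup E] [NormedSpace ℝ E]

theorem openSegment_subset_ball_of_mem_ball_of_mem_closedBall {w x y : E} {r : ℝ}
    (hx : x ∈ ball w r) (hy : y ∈ closedBall w r) : openSegment ℝ x y ⊆ ball w r := by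
  have hr : r ≠ 0 := (pos_of_mem_ball hx).ne'
  rw [← isOpen_ball.interior_eq] at hx ⊢
  rw [← closure_ball w hr] at hy
  exact (convex_ball w r).openSegment_interior_closure_subset_interior hx hy

theorem mem_ball_of_mem_convexHull_of_ne {w a b z p : E} {r : ℝ} (ha : a ∈ ball w r)
    (hb : b ∈ ball w r) (hz : z ∈ closedBall w r) (hp : p ∈ convexHull ℝ {a, b, z})
    (hpz : p ≠ z) : p ∈ ball w r := by
  rw [← convexJoin_segment_singleton, mem_convexJoin] at hp
  obtain ⟨q, hq, _, rfl, hpq⟩ := hp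
  have hq : q ∈ ball w r := (convex_ball w r).segment_subset ha hb hq
  rcases eq_or_ne q p with rfl | hne
  · exact hq
  · exact openSegment_subset_ball_of_mem_ball_of_mem_closedBall hq hz
      (mem_openSegment_of_ne_left_right hne hpz.symm hpq)

theorem dist_lt_or_dist_lt_of_mem_convexHull {u u' c p : E} {r r' : ℝ} (hc : dist c u < r)
    (hc' : dist c u' < r') (hp : p ∈ convexHull ℝ {c, u, u'}) :
    dist p u < r ∨ dist p u' < r' := by
  have hsum : ConvexOn ℝ univ fun z => dist z u + dist z u' :=
    (convexOn_univ_dist u).add (convexOn_univ_dist u')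
  have huu' : dist u u' < r + r' := by linarith [dist_triangle_left u u' c]
  have hvertices : {c, u, u'} ⊆ {z | z ∈ univ ∧ dist z u + dist z u' < r + r'} := by
    simp only [insert_subset_iff, singleton_subset_iff, mem_ofPred_eq, mem_univ, true_and,
      dist_self, dist_comm u' u]
    exact ⟨by linarith, by linarith, by linarith⟩
  have hp := convexHull_min hvertices (hsum.convex_lt (r + r')) hp
  by_contra! h
  linarith [hp.2]

end

theorem stmt13_general (u v u' v' : Pt)
    (hcross : Crosses u v u' v')
    (h1 : dist u v' < dist u v)
    (h3 : dist u' v < dist u' v')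
    (p : Pt) (hp4 : p ≠ v')
    (hp : p ∈ convexHull ℝ ({u, v', v, u'} : Set Pt)) :
    dist p u < dist u v ∨ dist p u' < dist u' v' := by
  obtain ⟨c, hc, hc'⟩ := hcross
  have hr : 0 < dist u v := dist_nonneg.trans_lt h1
  have hr' : 0 < dist u' v' := dist_nonneg.trans_lt h3
  have hcu : dist c u < dist u v :=
    openSegment_subset_ball_of_mem_ball_of_mem_closedBall (mem_ball_self hr)
      (mem_closedBall'.2 le_rfl) hc
  have hcu' : dist c u' < dist u' v' :=
    openSegment_subset_ball_of_mem_ball_of_mem_closedBall (mem_ball_self hr')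
      (mem_closedBall'.2 le_rfl) hc'
  rw [insert_comm v' v, pair_comm v' u'] at hp
  rcases convexHull_quadrilateral_subset (openSegment_subset_segment ℝ _ _ hc)
    (openSegment_subset_segment ℝ _ _ hc') hp with ((h | h) | h) | h
  · exact dist_lt_or_dist_lt_of_mem_convexHull hcu hcu' h
  · refine Or.inl ((convex_ball u _).convexHull_subset_iff.2 ?_ h)
    simp [insert_subset_iff, hcu, hr, dist_comm v' u, h1]
  · refine Or.inr ((convex_ball u' _).convexHull_subset_iff.2 ?_ h)
    simp [insert_subset_iff, hcu', hr', dist_comm v u', h3]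
  · exact Or.inr (mem_ball_of_mem_convexHull_of_ne hcu' (mem_ball'.2 h3)
      (mem_closedBall'.2 le_rfl) h hp4)

theorem stmt13 (u v u' v' : Pt)
    (hcross : Crosses u v u' v')
    (h1 : dist u v' < dist u v) (h2 : dist u v < dist u u')
    (h3 : dist u' v < dist u' v') (h4 : dist u' v' < dist u u')
    (p : Pt) (hp1 : p ≠ u) (hp2 : p ≠ v) (hp3 : p ≠ u') (hp4 : p ≠ v')
    (hp : p ∈ convexHull ℝ ({u, v', v, u'} : Set Pt)) :
    dist p u < dist u v ∨ dist p u' < dist u' v' :=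
  stmt13_general u v u' v' hcross h1 h3 p hp4 hp
end
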